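/- arXiv:2505.06613 — 3 statements merged into one kernel-verified Lean document; each statement's English description precedes it below -/
import Mathlib

section
/- Let ρ : ℝ³ → ℝ be a nonnegative C¹ function with compact support and let 0 < α < 3. Then for every x ∈ ℝ³, x · ∇((|·|^{-α} * ρ))(x) = (|·|^{-α} * (y ↦ y · ∇ρ(y)))(x) + (3 - α)(|·|^{-α} * ρ)(x). -/
/-!
Write `K = ‖·‖ ^ (-α)`, so that the potential is `K ⋆ ρ`. Since `K` is homogeneous of
degree `-α`, the substitution `y ↦ t • y` in `d` dimensions gives, for `t > 0`,
`∫ K (x - y) ρ (t • y) dy = t ^ (α - d) (K ⋆ ρ) (t • x)`.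
Differentiating at `t = 1`, under the integral sign on the left and by the product rule on the
right, gives `(K ⋆ (y ↦ Dρ(y) y)) x = (α - d) (K ⋆ ρ) x + D(K ⋆ ρ)(x) x`.
-/

open MeasureTheory Real
open scoped RealInnerProductSpace

noncomputable section

abbrev V3 := EuclideanSpace ℝ (Fin 3)

open Set Metric Filter Topology Module ContinuousLinearMap
open scoped Convolution

section Calculus

variable {E : Type*} [NormedAddCommGroup E] [NormedSpace ℝ E] {ρ : E → ℝ} {R M : ℝ}

theorem fderiv_comp_smul_eq_zero_of_lt_norm (hR : tsupport ρ ⊆ closedBall 0 R)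
    {t : ℝ} (ht : 2⁻¹ < |t|) {v : E} (hv : 2 * R < ‖v‖) : fderiv ℝ ρ (t • v) = 0 := by
  refine image_eq_zero_of_notMem_tsupport fun hmem => ?_
  have := mem_closedBall_zero_iff.1 (hR (tsupport_fderiv_subset ℝ hmem))
  rw [norm_smul, norm_eq_abs] at this
  nlinarith [abs_nonneg t, norm_nonneg v]

theorem norm_mul_fderiv_comp_smul_sub_le_indicator (K : E → ℝ)
    (hR : tsupport ρ ⊆ closedBall 0 R) (hM : ∀ z, ‖fderiv ℝ ρ z‖ ≤ M)
    {t : ℝ} (ht : t ∈ ball (1 : ℝ) 2⁻¹) (x u : E) :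
    ‖K u * fderiv ℝ ρ (t • (x - u)) (x - u)‖
      ≤ (closedBall x (2 * R)).indicator (fun u => ‖K u‖ * (M * (2 * R))) u := by
  have ht : 2⁻¹ < |t| := by
    rw [mem_ball, dist_eq, abs_sub_comm] at ht
    linarith [abs_sub_abs_le_abs_sub (1 : ℝ) t, abs_one (α := ℝ)]
  by_cases hu : ‖x - u‖ ≤ 2 * R
  · rw [indicator_of_mem (by rwa [mem_closedBall, dist_comm, dist_eq_norm]), norm_mul]
    gcongr
    exact (le_opNorm _ _).trans
      (mul_le_mul (hM _) hu (norm_nonneg _) ((norm_nonneg _).trans (hM 0)))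
  · rw [indicator_of_notMem (by rwa [mem_closedBall, dist_comm, dist_eq_norm]),
      fderiv_comp_smul_eq_zero_of_lt_norm hR ht (not_le.1 hu)]
    simp

end Calculus

section Convolution

variable {E : Type*} [NormedAddCommGroup E] [NormedSpace ℝ E] [FiniteDimensional ℝ E]
  [MeasurableSpace E] [BorelSpace E] {μ : Measure E}

theorem locallyIntegrable_norm_rpow_neg [μ.IsAddHaarMeasure] [Nontrivial E] {α : ℝ}
    (hα : α < finrank ℝ E) : LocallyIntegrable (fun y : E => ‖y‖ ^ (-α)) μ :=
  locallyIntegrable_of_norm_le_rpow finrank_pos hα (C := 1)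
    (ae_of_all _ fun y => by simp [abs_of_nonneg (rpow_nonneg (norm_nonneg y) _)])
    (by fun_prop : Measurable fun y : E => ‖y‖ ^ (-α)).aestronglyMeasurable

variable {K ρ : E → ℝ} {α : ℝ}

theorem convolution_comp_smul_of_homogeneous [μ.IsAddHaarMeasure]
    (hK : ∀ t > 0, ∀ v, K (t • v) = t ^ (-α) * K v) {t : ℝ} (ht : 0 < t) (x : E) :
    (K ⋆[mul ℝ ℝ, μ] fun y => ρ (t • y)) x
      = t ^ (α - finrank ℝ E) * (K ⋆[mul ℝ ℝ, μ] ρ) (t • x) := by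
  have hK' : ∀ u, K u = t ^ α * K (t • u) := fun u => by
    rw [hK t ht, ← mul_assoc, ← rpow_add ht, add_neg_cancel, rpow_zero, one_mul]
  have hintegrand : (fun u => K u * ρ (t • (x - u)))
      = fun u => t ^ α * (K (t • u) * ρ (t • x - t • u)) :=
    funext fun u => by rw [hK' u, smul_sub, mul_assoc]
  rw [convolution_mul, hintegrand, integral_const_mul,
    Measure.integral_comp_smul_of_nonneg μ (fun v => K v * ρ (t • x - v)) t (hR := ht.le),
    smul_eq_mul, ← mul_assoc, ← rpow_natCast, ← rpow_neg ht.le, ← rpow_add ht, sub_eq_add_neg]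
  rfl

theorem hasDerivAt_convolution_comp_smul (hK : LocallyIntegrable K μ) (hρ : ContDiff ℝ 1 ρ)
    (hsupp : HasCompactSupport ρ) (x : E) :
    HasDerivAt (fun t : ℝ => (K ⋆[mul ℝ ℝ, μ] fun y => ρ (t • y)) x)
      ((K ⋆[mul ℝ ℝ, μ] fun y => fderiv ℝ ρ y y) x) 1 := by
  obtain ⟨R, hR⟩ := hsupp.isBounded.subset_closedBall 0
  have hDρ : Continuous (fderiv ℝ ρ) := hρ.continuous_fderiv one_ne_zero
  obtain ⟨M, hM⟩ := (hsupp.fderiv ℝ).exists_bound_of_continuous hDρ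
  have hsmul : ∀ t : ℝ, Continuous fun u : E => t • (x - u) := by fun_prop
  have hline : ∀ (t : ℝ) (u : E), HasDerivAt (fun s : ℝ => s • (x - u)) (x - u) t :=
    fun t u => by simpa using (hasDerivAt_id t).smul_const (x - u)
  have hderiv := hasDerivAt_integral_of_dominated_loc_of_deriv_le
    (F := fun (t : ℝ) u => K u * ρ (t • (x - u)))
    (F' := fun (t : ℝ) u => K u * fderiv ℝ ρ (t • (x - u)) (x - u))
    (ball_mem_nhds 1 (by norm_num))
    (Eventually.of_forall fun t =>
      hK.aestronglyMeasurable.mul (hρ.continuous.comp (hsmul t)).aestronglyMeasurable)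
    (by simpa only [one_smul, mul_apply'] using
      (hsupp.convolutionExists_right (mul ℝ ℝ) hK hρ.continuous x).integrable)
    (hK.aestronglyMeasurable.mul
      ((hDρ.comp (hsmul 1)).clm_apply (by fun_prop)).aestronglyMeasurable)
    (ae_of_all _ fun u t ht => norm_mul_fderiv_comp_smul_sub_le_indicator K hR hM ht x u)
    ((integrable_indicator_iff measurableSet_closedBall).2
      ((hK.integrableOn_isCompact (isCompact_closedBall x _)).norm.mul_const _))
    (ae_of_all _ fun u t _ =>
      ((hρ.differentiable one_ne_zero _).hasFDerivAt.comp_hasDerivAt t (hline t u)).const_mul _)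
  simp only [one_smul] at hderiv
  exact hderiv.2

theorem fderiv_convolution_apply_self_of_homogeneous [μ.IsAddHaarMeasure]
    (hK_int : LocallyIntegrable K μ) (hK_hom : ∀ t > 0, ∀ v, K (t • v) = t ^ (-α) * K v)
    (hρ : ContDiff ℝ 1 ρ) (hsupp : HasCompactSupport ρ) (x : E) :
    fderiv ℝ (K ⋆[mul ℝ ℝ, μ] ρ) x x
      = (K ⋆[mul ℝ ℝ, μ] fun y => fderiv ℝ ρ y y) x
        + (finrank ℝ E - α) * (K ⋆[mul ℝ ℝ, μ] ρ) x := by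
  set F := K ⋆[mul ℝ ℝ, μ] ρ
  have hFline : HasDerivAt (fun t : ℝ => F (t • x)) (fderiv ℝ F x x) 1 :=
    (hsupp.hasFDerivAt_convolution_right _ hK_int hρ x).differentiableAt.hasFDerivAt
      |>.comp_hasDerivAt_of_eq 1 (by simpa using (hasDerivAt_id (1 : ℝ)).smul_const x)
        (one_smul ℝ x).symm
  have hpow : HasDerivAt (fun t : ℝ => t ^ (α - finrank ℝ E)) (α - finrank ℝ E) 1 := by
    simpa using hasDerivAt_rpow_const (p := α - finrank ℝ E) (Or.inl one_ne_zero)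
  have hscaled : HasDerivAt (fun t : ℝ => t ^ (α - finrank ℝ E) * F (t • x))
      ((α - finrank ℝ E) * F x + fderiv ℝ F x x) 1 := by
    simpa using hpow.fun_mul hFline
  have hscaling : (fun t : ℝ => (K ⋆[mul ℝ ℝ, μ] fun y => ρ (t • y)) x)
      =ᶠ[𝓝 1] fun t => t ^ (α - finrank ℝ E) * F (t • x) := by
    filter_upwards [Ioi_mem_nhds one_pos] with t ht
    exact convolution_comp_smul_of_homogeneous hK_hom ht x
  have := (hasDerivAt_convolution_comp_smul hK_int hρ hsupp x).unique
    (hscaled.congr_of_eventuallyEq hscaling)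
  linarith

end Convolution

theorem stmt3_general (ρ : V3 → ℝ) (hρ : ContDiff ℝ 1 ρ) (hsupp : HasCompactSupport ρ)
    (α : ℝ) (hα3 : α < 3) (x : V3) :
    ⟪x, gradient (fun z => ∫ y, ‖z - y‖ ^ (-α) * ρ y) x⟫
      = (∫ y, ‖x - y‖ ^ (-α) * ⟪y, gradient ρ y⟫)
        + (3 - α) * ∫ y, ‖x - y‖ ^ (-α) * ρ y := by
  have hconv : ∀ g : V3 → ℝ, (fun z => ∫ y, ‖z - y‖ ^ (-α) * g y)
      = (fun u : V3 => ‖u‖ ^ (-α)) ⋆[mul ℝ ℝ, volume] g :=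
    fun g => funext fun z => by rw [convolution_mul_swap]
  have hhom : ∀ t > 0, ∀ v : V3, ‖t • v‖ ^ (-α) = t ^ (-α) * ‖v‖ ^ (-α) := fun t ht v => by
    rw [norm_smul, norm_of_nonneg ht.le, mul_rpow ht.le (norm_nonneg v)]
  have hEuler := fderiv_convolution_apply_self_of_homogeneous
    (locallyIntegrable_norm_rpow_neg (μ := volume) (by simpa using hα3)) hhom hρ hsupp x
  have hgrad : ∀ (f : V3 → ℝ) (z v : V3), ⟪v, gradient f z⟫ = fderiv ℝ f z v :=
    fun f z v => by rw [real_inner_comm, inner_gradient_left]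
  simp only [hgrad]
  rw [hconv, congrFun (hconv _) x, congrFun (hconv ρ) x, hEuler, finrank_euclideanSpace_fin]
  norm_num

theorem stmt3 (ρ : V3 → ℝ) (hρ : ContDiff ℝ 1 ρ) (hsupp : HasCompactSupport ρ)
    (hpos : ∀ x, 0 ≤ ρ x) (α : ℝ) (hα0 : 0 < α) (hα3 : α < 3) (x : V3) :
    ⟪x, gradient (fun z => ∫ y, ‖z - y‖ ^ (-α) * ρ y) x⟫
      = (∫ y, ‖x - y‖ ^ (-α) * ⟪y, gradient ρ y⟫)
        + (3 - α) * ∫ y, ‖x - y‖ ^ (-α) * ρ y :=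
  stmt3_general ρ hρ hsupp α hα3 x
end
end

section
/- Let u : ℝ³ → ℝ be measurable with |u(x)|² ≤ C/(1+|x|⁸) for some C > 0, and let 0 < α < 3. Then there is a constant C' > 0 such that for all x ∈ ℝ³, ∫_{ℝ³} |x-y|^{-α} u(y)² dy ≤ C'/(1+|x|^α). -/
open MeasureTheory Real

noncomputable section

/-!
Write `k(z) = ‖z‖ ^ (-α)` and let `W` be an integrable, bounded weight dominating both `g` and
`‖y‖ ^ α * g y`. Splitting `k` at radius one shows that `k * W` is bounded by
`sup W * ∫_{‖z‖<1} k + ∫ W`, which is finite because `α < d`. To gain the decay, use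
`‖x‖ ^ α ≤ 2 ^ α (‖x - y‖ ^ α + ‖y‖ ^ α)`: the first term cancels the kernel, and the second
is absorbed into the weight, so `(1 + ‖x‖ ^ α) * (k * g)(x) ≤ (1 + 2 ^ α) (k * W)(x) + 2 ^ α ∫ W`.
For `g ≤ C (1 + ‖y‖) ^ (-β)` with `β > d + α`, the weight `W = C (1 + ‖y‖) ^ (α - β)` works.
-/

open Metric Module

lemma Real.add_rpow_le_two_rpow_mul_rpow_add_rpow {a b p : ℝ} (ha : 0 ≤ a) (hb : 0 ≤ b)
    (hp : 0 ≤ p) : (a + b) ^ p ≤ 2 ^ p * (a ^ p + b ^ p) := by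
  have hmax : max a b ^ p ≤ a ^ p + b ^ p := by
    rcases le_total a b with hab | hab
    · rw [max_eq_right hab]; linarith [rpow_nonneg ha p]
    · rw [max_eq_left hab]; linarith [rpow_nonneg hb p]
  calc (a + b) ^ p ≤ (2 * max a b) ^ p := by
        rw [two_mul]; gcongr <;> simp
    _ = 2 ^ p * max a b ^ p := mul_rpow zero_le_two (le_max_of_le_left ha)
    _ ≤ 2 ^ p * (a ^ p + b ^ p) := by gcongr

lemma Real.rpow_mul_rpow_neg_le_one {r : ℝ} (hr : 0 ≤ r) (p : ℝ) : r ^ p * r ^ (-p) ≤ 1 := by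
  rw [rpow_neg hr]
  exact mul_inv_le_one

lemma one_add_pow_inv_le {t : ℝ} (ht : 0 ≤ t) (n : ℕ) :
    (1 + t ^ n)⁻¹ ≤ 2 ^ (n - 1) * (1 + t) ^ (-(n : ℝ)) := by
  rw [rpow_neg (by positivity), rpow_natCast, ← div_eq_mul_inv, ← one_div,
    div_le_div_iff₀ (by positivity) (by positivity), one_mul]
  simpa using add_pow_le zero_le_one ht n

lemma rpow_neg_norm_mul_le_indicator_add {E : Type*} [SeminormedAddCommGroup E] {α B w : ℝ}
    (hα : 0 ≤ α) (hw0 : 0 ≤ w) (hwB : w ≤ B) (z : E) :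
    ‖z‖ ^ (-α) * w ≤ B * (ball 0 1).indicator (fun z ↦ ‖z‖ ^ (-α)) z + w := by
  by_cases hz : ‖z‖ < 1
  · rw [Set.indicator_of_mem (mem_ball_zero_iff.2 hz)]
    nlinarith [rpow_nonneg (norm_nonneg z) (-α)]
  · rw [Set.indicator_of_notMem (by simpa using hz), mul_zero, zero_add]
    exact mul_le_of_le_one_left hw0
      (rpow_le_one_of_one_le_of_nonpos (not_lt.1 hz) (neg_nonpos.2 hα))

lemma one_add_norm_rpow_mul_le {E : Type*} [SeminormedAddCommGroup E] {α g w : ℝ} (hα : 0 ≤ α)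
    (x y : E) (hg0 : 0 ≤ g) (hgw : g ≤ w) (hgw' : ‖y‖ ^ α * g ≤ w) :
    (1 + ‖x‖ ^ α) * (‖x - y‖ ^ (-α) * g)
      ≤ (1 + 2 ^ α) * (‖x - y‖ ^ (-α) * w) + 2 ^ α * w := by
  set k := ‖x - y‖ ^ (-α)
  have hk : 0 ≤ k := rpow_nonneg (norm_nonneg _) _
  have htriangle : ‖x‖ ^ α ≤ 2 ^ α * (‖x - y‖ ^ α + ‖y‖ ^ α) :=
    (rpow_le_rpow (norm_nonneg x) (norm_le_norm_sub_add x y) hα).trans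
      (add_rpow_le_two_rpow_mul_rpow_add_rpow (norm_nonneg _) (norm_nonneg _) hα)
  have hcancel : ‖x - y‖ ^ α * k ≤ 1 := rpow_mul_rpow_neg_le_one (norm_nonneg _) α
  have h2α : 0 ≤ (2 : ℝ) ^ α := by positivity
  calc (1 + ‖x‖ ^ α) * (k * g)
      ≤ (1 + 2 ^ α * (‖x - y‖ ^ α + ‖y‖ ^ α)) * (k * g) := by gcongr
    _ = k * g + 2 ^ α * ((‖x - y‖ ^ α * k) * g) + 2 ^ α * (k * (‖y‖ ^ α * g)) := by ring
    _ ≤ k * w + 2 ^ α * (1 * w) + 2 ^ α * (k * w) := by gcongr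
    _ = (1 + 2 ^ α) * (k * w) + 2 ^ α * w := by ring

section RieszPotential

variable {E : Type*} [NormedAddCommGroup E] [MeasurableSpace E]

/-- The convolution of `g` with `‖·‖ ^ (-α)`, without the usual normalization and indexed by the
exponent of the kernel rather than by `d - α`. -/
def rieszPotential (α : ℝ) (μ : Measure E) (g : E → ℝ) (x : E) : ℝ :=
  ∫ y, ‖x - y‖ ^ (-α) * g y ∂μ

variable [NormedSpace ℝ E] [FiniteDimensional ℝ E] [BorelSpace E] {μ : Measure E}
  [μ.IsAddHaarMeasure] {α B : ℝ} {g W : E → ℝ}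

lemma integrableOn_ball_rpow_neg_norm (hα0 : 0 ≤ α) (hα : α < finrank ℝ E) (r : ℝ) :
    IntegrableOn (fun z : E ↦ ‖z‖ ^ (-α)) (ball 0 r) μ :=
  integrableOn_ball_of_norm_le_rpow (C := 1) (by exact_mod_cast hα0.trans_lt hα) hα
    (ae_of_all _ fun z ↦ by simp [abs_of_nonneg (rpow_nonneg (norm_nonneg z) _)])
    (measurable_norm.pow_const _).aestronglyMeasurable

lemma integrable_rpow_neg_norm_sub_mul (hα0 : 0 ≤ α) (hα : α < finrank ℝ E)
    (hW : Integrable W μ) (hW0 : 0 ≤ W) (hWB : ∀ y, W y ≤ B) (x : E) :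
    Integrable (fun y ↦ ‖x - y‖ ^ (-α) * W y) μ := by
  have hk := (integrableOn_ball_rpow_neg_norm (μ := μ) hα0 hα 1).integrable_indicator
    measurableSet_ball
  refine ((hk.comp_sub_left x).const_mul B |>.add hW).mono'
    ((by fun_prop : Measurable fun y ↦ ‖x - y‖ ^ (-α)).aestronglyMeasurable.mul
      hW.aestronglyMeasurable) (ae_of_all _ fun y ↦ ?_)
  rw [Real.norm_of_nonneg (mul_nonneg (rpow_nonneg (norm_nonneg _) _) (hW0 y))]
  exact rpow_neg_norm_mul_le_indicator_add hα0 (hW0 y) (hWB y) (x - y)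

lemma rieszPotential_le (hα0 : 0 ≤ α) (hα : α < finrank ℝ E) (hW : Integrable W μ)
    (hW0 : 0 ≤ W) (hWB : ∀ y, W y ≤ B) (x : E) :
    rieszPotential α μ W x ≤ B * ∫ z in ball 0 1, ‖z‖ ^ (-α) ∂μ + ∫ y, W y ∂μ := by
  have hk := (integrableOn_ball_rpow_neg_norm (μ := μ) hα0 hα 1).integrable_indicator
    measurableSet_ball
  calc rieszPotential α μ W x
      ≤ ∫ y, B * (ball 0 1).indicator (fun z ↦ ‖z‖ ^ (-α)) (x - y) + W y ∂μ :=
        integral_mono (integrable_rpow_neg_norm_sub_mul hα0 hα hW hW0 hWB x)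
          ((hk.comp_sub_left x).const_mul B |>.add hW)
          fun y ↦ rpow_neg_norm_mul_le_indicator_add hα0 (hW0 y) (hWB y) (x - y)
    _ = B * ∫ z in ball 0 1, ‖z‖ ^ (-α) ∂μ + ∫ y, W y ∂μ := by
        rw [integral_add ((hk.comp_sub_left x).const_mul B) hW, integral_const_mul,
          integral_sub_left_eq_self, integral_indicator measurableSet_ball]

theorem exists_rieszPotential_le_div_of_le_weight (hα0 : 0 ≤ α) (hα : α < finrank ℝ E)
    (hW : Integrable W μ) (hWB : ∀ y, W y ≤ B) (hg0 : 0 ≤ g) (hgW : g ≤ W)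
    (hgW' : ∀ y, ‖y‖ ^ α * g y ≤ W y) :
    ∃ C > 0, ∀ x, rieszPotential α μ g x ≤ C / (1 + ‖x‖ ^ α) := by
  have hW0 : 0 ≤ W := hg0.trans hgW
  let K := (1 + 2 ^ α) * (B * ∫ z in ball 0 1, ‖z‖ ^ (-α) ∂μ + ∫ y, W y ∂μ)
    + 2 ^ α * ∫ y, W y ∂μ
  refine ⟨max K 1, lt_max_of_lt_right one_pos, fun x ↦ ?_⟩
  have hx : 0 < 1 + ‖x‖ ^ α := by positivity
  have hkW := integrable_rpow_neg_norm_sub_mul hα0 hα hW hW0 hWB x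
  rw [le_div_iff₀ hx, mul_comm, rieszPotential, ← integral_const_mul]
  calc ∫ y, (1 + ‖x‖ ^ α) * (‖x - y‖ ^ (-α) * g y) ∂μ
      ≤ ∫ y, (1 + 2 ^ α) * (‖x - y‖ ^ (-α) * W y) + 2 ^ α * W y ∂μ :=
        integral_mono_of_nonneg
          (ae_of_all _ fun y ↦ mul_nonneg hx.le (mul_nonneg (by positivity) (hg0 y)))
          ((hkW.const_mul _).add (hW.const_mul _))
          (ae_of_all _ fun y ↦ one_add_norm_rpow_mul_le hα0 x y (hg0 y) (hgW y) (hgW' y))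
    _ = (1 + 2 ^ α) * rieszPotential α μ W x + 2 ^ α * ∫ y, W y ∂μ := by
        rw [integral_add (hkW.const_mul _) (hW.const_mul _), integral_const_mul,
          integral_const_mul, rieszPotential]
    _ ≤ K := by
        have := rieszPotential_le hα0 hα hW hW0 hWB x
        simp only [K]
        gcongr
    _ ≤ max K 1 := le_max_left _ _

theorem exists_rieszPotential_le_div_of_le_one_add_norm_rpow {β C : ℝ} (hα0 : 0 ≤ α)
    (hα : α < finrank ℝ E) (hβ : finrank ℝ E + α < β) (hg0 : 0 ≤ g)
    (hg : ∀ y, g y ≤ C * (1 + ‖y‖) ^ (-β)) :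
    ∃ C' > 0, ∀ x, rieszPotential α μ g x ≤ C' / (1 + ‖x‖ ^ α) := by
  have hC : 0 ≤ C := by simpa using (hg0 0).trans (hg 0)
  have hone : ∀ y : E, 1 ≤ 1 + ‖y‖ := fun y ↦ le_add_of_nonneg_right (norm_nonneg y)
  refine exists_rieszPotential_le_div_of_le_weight (B := C)
    (W := fun y ↦ C * (1 + ‖y‖) ^ (-(β - α))) hα0 hα
    ((integrable_one_add_norm (by linarith)).const_mul C)
    (fun y ↦ mul_le_of_le_one_right hC (rpow_le_one_of_one_le_of_nonpos (hone y) (by linarith)))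
    hg0 (fun y ↦ (hg y).trans ?_) fun y ↦ ?_
  · exact mul_le_mul_of_nonneg_left (rpow_le_rpow_of_exponent_le (hone y) (by linarith)) hC
  · calc ‖y‖ ^ α * g y ≤ (1 + ‖y‖) ^ α * (C * (1 + ‖y‖) ^ (-β)) :=
          mul_le_mul (rpow_le_rpow (norm_nonneg y) (by linarith) hα0) (hg y) (hg0 y)
            (by positivity)
      _ = C * (1 + ‖y‖) ^ (-(β - α)) := by
          rw [mul_left_comm, ← rpow_add (by positivity)]
          ring_nf

end RieszPotential

theorem stmt5_general (u : V3 → ℝ) (C : ℝ) (hC : 0 < C)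
    (hdecay : ∀ x : V3, u x ^ 2 ≤ C / (1 + ‖x‖ ^ 8))
    (α : ℝ) (hα0 : 0 < α) (hα3 : α < 3) :
    ∃ C' : ℝ, 0 < C' ∧ ∀ x : V3,
      (∫ y, ‖x - y‖ ^ (-α) * u y ^ 2) ≤ C' / (1 + ‖x‖ ^ α) := by
  have hdim : (finrank ℝ V3 : ℝ) = 3 := by simp
  refine exists_rieszPotential_le_div_of_le_one_add_norm_rpow (β := 8) (C := 2 ^ 7 * C)
    hα0.le (by rwa [hdim]) (by rw [hdim]; linarith) (fun y ↦ sq_nonneg (u y)) fun y ↦ ?_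
  calc u y ^ 2 ≤ C * (1 + ‖y‖ ^ 8)⁻¹ := (hdecay y).trans_eq (div_eq_mul_inv _ _)
    _ ≤ C * (2 ^ 7 * (1 + ‖y‖) ^ (-(8 : ℝ))) := by
        gcongr
        exact_mod_cast one_add_pow_inv_le (norm_nonneg y) 8
    _ = 2 ^ 7 * C * (1 + ‖y‖) ^ (-(8 : ℝ)) := by ring

theorem stmt5 (u : V3 → ℝ) (hu : Measurable u) (C : ℝ) (hC : 0 < C)
    (hdecay : ∀ x : V3, u x ^ 2 ≤ C / (1 + ‖x‖ ^ 8))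
    (α : ℝ) (hα0 : 0 < α) (hα3 : α < 3) :
    ∃ C' : ℝ, 0 < C' ∧ ∀ x : V3,
      (∫ y, ‖x - y‖ ^ (-α) * u y ^ 2) ≤ C' / (1 + ‖x‖ ^ α) :=
  stmt5_general u C hC hdecay α hα0 hα3
end
end

section
/- There exists a constant C > 0 such that for all R ≥ 1, ∫_{ℝ³} 1/((1+|x|⁴)(1+|x - R e₁|⁴)) dx ≤ C (R^{-4} + R^{-5}), where e₁ = (1,0,0). -/
open MeasureTheory Real

noncomputable section

def e₁ : V3 := EuclideanSpace.single 0 1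

lemma gInt : Integrable (fun x : V3 => (1 + ‖x‖ ^ 4)⁻¹) := by
  have h4 : ((Module.finrank ℝ V3 : ℝ) < (4 : ℝ)) := by
    simp [finrank_euclideanSpace]
    norm_num
  refine ((integrable_one_add_norm (E := V3) (μ := volume) h4).const_mul 8).mono'
    (Measurable.aestronglyMeasurable (by fun_prop))
    (Filter.Eventually.of_forall fun x => ?_)
  have hx : (0:ℝ) ≤ ‖x‖ := norm_nonneg x
  have h1 : (0:ℝ) < 1 + ‖x‖ := by linarith
  have hpow : (1 + ‖x‖) ^ (-(4:ℝ)) = ((1 + ‖x‖) ^ (4:ℕ))⁻¹ := by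
    rw [show (-(4:ℝ)) = -((4:ℕ):ℝ) by norm_num, Real.rpow_neg h1.le, Real.rpow_natCast]
  have hp : (0:ℝ) < 1 + ‖x‖ ^ 4 := by positivity
  rw [Real.norm_eq_abs, abs_of_pos (by positivity), hpow]
  have : (1:ℝ)/(1 + ‖x‖ ^ 4) ≤ 8/((1 + ‖x‖) ^ 4) := by
    rw [div_le_div_iff₀ hp (by positivity)]
    nlinarith [sq_nonneg ‖x‖, sq_nonneg (‖x‖ - 1), sq_nonneg (‖x‖^2 - 1),
      sq_nonneg (‖x‖^2 - ‖x‖), hx]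
  calc (1 + ‖x‖ ^ 4)⁻¹ = 1/(1 + ‖x‖ ^ 4) := (one_div _).symm
    _ ≤ 8/((1 + ‖x‖) ^ 4) := this
    _ = 8 * ((1 + ‖x‖) ^ (4:ℕ))⁻¹ := by rw [div_eq_mul_inv]

lemma key_half (R a b : ℝ) (hR : 1 ≤ R) (ha : 0 ≤ a) (hb2 : R/2 ≤ b) :
    (1 + a ^ 4)⁻¹ * (1 + b ^ 4)⁻¹
      ≤ 16 * (R ^ 4)⁻¹ * ((1 + a ^ 4)⁻¹ + (1 + b ^ 4)⁻¹) := by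
  have hR0 : (0:ℝ) < R := by linarith
  have pa : (0:ℝ) < 1 + a ^ 4 := by positivity
  have pb : (0:ℝ) < 1 + b ^ 4 := by positivity
  have h1 : (1 + b ^ 4)⁻¹ ≤ 16 * (R ^ 4)⁻¹ := by
    have hpow : (R/2) ^ 4 ≤ b ^ 4 := pow_le_pow_left₀ (by linarith) hb2 4
    have : (1:ℝ)/(1 + b ^ 4) ≤ 16/(R ^ 4) := by
      rw [div_le_div_iff₀ pb (by positivity)]
      nlinarith
    simpa [one_div, div_eq_mul_inv] using this
  calc (1 + a ^ 4)⁻¹ * (1 + b ^ 4)⁻¹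
      ≤ (1 + a ^ 4)⁻¹ * (16 * (R ^ 4)⁻¹) :=
        mul_le_mul_of_nonneg_left h1 (by positivity)
    _ = 16 * (R ^ 4)⁻¹ * (1 + a ^ 4)⁻¹ := by ring
    _ ≤ 16 * (R ^ 4)⁻¹ * ((1 + a ^ 4)⁻¹ + (1 + b ^ 4)⁻¹) := by
        have hb' : (0:ℝ) ≤ (1 + b ^ 4)⁻¹ := by positivity
        have hc : (0:ℝ) ≤ 16 * (R ^ 4)⁻¹ := by positivity
        nlinarith

lemma key (R a b : ℝ) (hR : 1 ≤ R) (ha : 0 ≤ a) (hb : 0 ≤ b) (hab : R ≤ a + b) :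
    (1 + a ^ 4)⁻¹ * (1 + b ^ 4)⁻¹
      ≤ 16 * (R ^ 4)⁻¹ * ((1 + a ^ 4)⁻¹ + (1 + b ^ 4)⁻¹) := by
  rcases le_total a b with h | h
  · exact key_half R a b hR ha (by linarith)
  · have := key_half R b a hR hb (by linarith)
    calc (1 + a ^ 4)⁻¹ * (1 + b ^ 4)⁻¹ = (1 + b ^ 4)⁻¹ * (1 + a ^ 4)⁻¹ := by ring
      _ ≤ 16 * (R ^ 4)⁻¹ * ((1 + b ^ 4)⁻¹ + (1 + a ^ 4)⁻¹) := this
      _ = 16 * (R ^ 4)⁻¹ * ((1 + a ^ 4)⁻¹ + (1 + b ^ 4)⁻¹) := by ring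

theorem stmt6 :
    ∃ C : ℝ, 0 < C ∧ ∀ R : ℝ, 1 ≤ R →
      (∫ x : V3, 1 / ((1 + ‖x‖ ^ 4) * (1 + ‖x - R • e₁‖ ^ 4)))
        ≤ C * (R ^ (-4 : ℝ) + R ^ (-5 : ℝ)) := by
  set g : V3 → ℝ := fun x => (1 + ‖x‖ ^ 4)⁻¹ with hg
  set I : ℝ := ∫ x : V3, g x with hI
  have hI0 : 0 ≤ I := integral_nonneg fun x => by positivity
  refine ⟨32 * I + 1, by positivity, fun R hR => ?_⟩
  have hR0 : (0:ℝ) < R := by linarith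
  set v : V3 := R • e₁ with hv
  have hvnorm : ‖v‖ = R := by
    rw [hv, norm_smul, Real.norm_eq_abs, abs_of_pos hR0]
    simp [e₁, EuclideanSpace.norm_single]
  -- integrability of translated g
  have hgt : Integrable (fun x : V3 => g (x - v)) := gInt.comp_sub_right v
  -- pointwise bound
  have hbound : ∀ x : V3, g x * g (x - v) ≤ 16 * (R ^ 4)⁻¹ * (g x + g (x - v)) := by
    intro x
    have htri : R ≤ ‖x‖ + ‖x - v‖ := by
      have : ‖v‖ ≤ ‖x‖ + ‖x - v‖ := by
        calc ‖v‖ = ‖x - (x - v)‖ := by rw [sub_sub_cancel]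
          _ ≤ ‖x‖ + ‖x - v‖ := norm_sub_le _ _
      linarith [hvnorm ▸ this]
    exact key R ‖x‖ ‖x - v‖ hR (norm_nonneg _) (norm_nonneg _) htri
  -- integrability of the product
  have hfm : AEStronglyMeasurable (fun x : V3 => g x * g (x - v)) volume :=
    Measurable.aestronglyMeasurable (by fun_prop)
  have hfi : Integrable (fun x : V3 => g x * g (x - v)) := by
    refine gInt.mono' hfm (Filter.Eventually.of_forall fun x => ?_)
    have h1 : (0:ℝ) < 1 + ‖x‖ ^ 4 := by positivity
    have h2 : (0:ℝ) < 1 + ‖x - v‖ ^ 4 := by positivity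
    rw [Real.norm_eq_abs, abs_of_pos (by positivity)]
    calc g x * g (x - v) ≤ g x * 1 := by
          apply mul_le_mul_of_nonneg_left _ (by positivity)
          exact inv_le_one_of_one_le₀ (le_add_of_nonneg_right (by positivity))
      _ = g x := mul_one _
  -- rewrite the integrand
  have heq : (∫ x : V3, 1 / ((1 + ‖x‖ ^ 4) * (1 + ‖x - R • e₁‖ ^ 4)))
      = ∫ x : V3, g x * g (x - v) := by
    congr 1; funext x
    rw [one_div, mul_inv]
  rw [heq]
  have hmono : (∫ x : V3, g x * g (x - v))
      ≤ ∫ x : V3, 16 * (R ^ 4)⁻¹ * (g x + g (x - v)) :=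
    integral_mono hfi (((gInt.add hgt).const_mul _)) hbound
  have hval : (∫ x : V3, 16 * (R ^ 4)⁻¹ * (g x + g (x - v)))
      = 16 * (R ^ 4)⁻¹ * (I + I) := by
    rw [integral_const_mul, integral_add gInt hgt]
    congr 1
    rw [integral_sub_right_eq_self g v]
  have hrpow : R ^ (-4:ℝ) = (R ^ 4)⁻¹ := by
    rw [show (-4:ℝ) = -((4:ℕ):ℝ) by norm_num, Real.rpow_neg hR0.le, Real.rpow_natCast]
  have hr5 : 0 ≤ R ^ (-5:ℝ) := Real.rpow_nonneg hR0.le _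
  calc (∫ x : V3, g x * g (x - v)) ≤ 16 * (R ^ 4)⁻¹ * (I + I) := hmono.trans hval.le
    _ = 32 * I * (R ^ 4)⁻¹ := by ring
    _ ≤ (32 * I + 1) * (R ^ 4)⁻¹ := by
        apply mul_le_mul_of_nonneg_right (by linarith) (inv_nonneg.mpr (by positivity))
    _ = (32 * I + 1) * R ^ (-4:ℝ) := by rw [hrpow]
    _ ≤ (32 * I + 1) * (R ^ (-4:ℝ) + R ^ (-5:ℝ)) := by
        apply mul_le_mul_of_nonneg_left (by linarith) (by linarith)
end
end
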